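/- Assume all entries of R and C are nonnegative. Let (r(1),𝒞(1)) and (r*,𝒞*) be equilibria and let OPT be the minimum total cost of a transformation path from (r(1),𝒞(1)) to (r*,𝒞*). Then there exists a transformation path from (r(1),𝒞(1)) to (r*,𝒞*) with total cost at most OPT + 2m·(2‖R‖_{1,1} + ‖C‖_{1,1}) all of whose intermediate column profiles belong to the set {𝒞(1), 𝒞*} ∪ {𝒞_{pq} : p, q ∈ Fin m}, where 𝒞_{pq} are the rounded column profiles obtained from optimal solutions of the linear-programming relaxations. -/

import Mathlib

/-!
Let `w p q` be the optimal value of `LP(p,q)`. A step pair `p → 𝒞 → q` through any column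
profile costs at least `w p q`, since the counting vector of `𝒞` is feasible; the rounded profile
`𝒞_{pq}` costs at most `w p q + 2‖R‖₁₁ + ‖C‖₁₁`. Let `V` be the `w`-distance to `r*`. The potential
`V i + min_p (T_𝒞(p) + V p)` drops by at most the cost of each step, which gives `OPT ≥ 2 V(r1)`.
Conversely, a shortest walk `r1 = d₀, …, d_a = r*` has `a < m` steps because `w ≥ 0`, and
alternating its rows with the profiles `𝒞_{d_j d_{j+1}}` gives a path of cost
`2 ∑_j (w(d_j, d_{j+1}) + 2‖R‖₁₁ + ‖C‖₁₁) ≤ 2 V(r1) + 2m(2‖R‖₁₁ + ‖C‖₁₁)`.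
-/

open Finset

/-- Reward needed to incentivize the row player to play `i'` when the columns play `𝒞`. -/
noncomputable def Trow {m n k : ℕ} [NeZero m] (R : Fin m → Fin n → ℝ)
    (𝒞 : Fin k → Fin n) (i' : Fin m) : ℝ :=
  (univ.sup' univ_nonempty fun i => ∑ j, R i (𝒞 j)) - ∑ j, R i' (𝒞 j)

/-- Reward needed to incentivize the column players to play `𝒞'` when the row plays `i`. -/
noncomputable def Tcol {m n k : ℕ} [NeZero n] (C : Fin m → Fin n → ℝ)
    (i : Fin m) (𝒞' : Fin k → Fin n) : ℝ :=
  k * (univ.sup' univ_nonempty fun q => C i q) - ∑ j, C i (𝒞' j)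

/-- `(i, 𝒞)` is an equilibrium if `T_𝒞(i) = 0` and `T_i(𝒞) = 0`. -/
def IsEquilibrium {m n k : ℕ} [NeZero m] [NeZero n] (R C : Fin m → Fin n → ℝ)
    (i : Fin m) (𝒞 : Fin k → Fin n) : Prop :=
  Trow R 𝒞 i = 0 ∧ Tcol C i 𝒞 = 0

/-- Total cost of the transformation path `P 0, P 1, …, P L`. -/
noncomputable def pathCost {m n k : ℕ} [NeZero m] [NeZero n] (R C : Fin m → Fin n → ℝ)
    (P : ℕ → Fin m × (Fin k → Fin n)) (L : ℕ) : ℝ :=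
  ∑ t ∈ Finset.range L, (Tcol C (P t).1 (P (t+1)).2 + Trow R (P t).2 (P (t+1)).1)

/-- The set of total costs of transformation paths from profile `a` to profile `b`. -/
noncomputable def transCosts {m n k : ℕ} [NeZero m] [NeZero n] (R C : Fin m → Fin n → ℝ)
    (a b : Fin m × (Fin k → Fin n)) : Set ℝ :=
  {x | ∃ (L : ℕ) (P : ℕ → Fin m × (Fin k → Fin n)),
    P 0 = a ∧ P L = b ∧ x = pathCost R C P L}

/-- Feasibility for the linear program `LP_z`. -/
def LPfeasible {m n : ℕ} (R : Fin m → Fin n → ℝ) (k : ℕ) (z : Fin m) (x : Fin n → ℝ) : Prop :=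
  (∀ q, 0 ≤ x q) ∧ (∑ q, x q = (k : ℝ)) ∧
  (∀ z' : Fin m, ∑ q, x q * R z' q ≤ ∑ q, x q * R z q)

/-- Objective of the linear program `LP_z(p,q)`. -/
noncomputable def LPobj {m n : ℕ} [NeZero n] (R C : Fin m → Fin n → ℝ) (k : ℕ)
    (p q z : Fin m) (x : Fin n → ℝ) : ℝ :=
  (k * (univ.sup' univ_nonempty fun q' => C p q') - ∑ q', x q' * C p q')
    + ∑ q', x q' * R z q' - ∑ q', x q' * R q q'

/-- The set of objective values attained by feasible solutions of the programs `LP_z(p,q)`. -/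
noncomputable def wstarSet {m n : ℕ} [NeZero n] (R C : Fin m → Fin n → ℝ) (k : ℕ)
    (p q : Fin m) : Set ℝ :=
  {y | ∃ (z : Fin m) (x : Fin n → ℝ), LPfeasible R k z x ∧ y = LPobj R C k p q z x}

section Walks

variable {α : Type*} (w : α → α → ℝ)

/-- The walk `d 0, d 1, …, d a`; values of `d` beyond `a` are irrelevant. -/
def walkCost (d : ℕ → α) (a : ℕ) : ℝ := ∑ j ∈ range a, w (d j) (d (j + 1))

def walkCosts (s t : α) : Set ℝ := {c | ∃ a d, d 0 = s ∧ d a = t ∧ walkCost w d a = c}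

noncomputable def walkDist (s t : α) : ℝ := sInf (walkCosts w s t)

variable {w}

lemma walkCost_nonneg (hw : ∀ p q, 0 ≤ w p q) (d : ℕ → α) (a : ℕ) : 0 ≤ walkCost w d a :=
  sum_nonneg fun _ _ => hw _ _

lemma walkCost_congr {d d' : ℕ → α} {a : ℕ} (h : ∀ j ≤ a, d j = d' j) :
    walkCost w d a = walkCost w d' a :=
  sum_congr rfl fun j hj => by
    rw [mem_range] at hj
    rw [h j hj.le, h (j + 1) hj]

lemma walkCost_cons (s : α) (d : ℕ → α) (a : ℕ) :
    walkCost w (fun | 0 => s | t + 1 => d t) (a + 1) = w s (d 0) + walkCost w d a := by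
  rw [walkCost, sum_range_succ']
  exact add_comm _ _

lemma walkCost_add_walkCost_loop {d d' : ℕ → α} {i l : ℕ} (hhead : ∀ t ≤ i, d' t = d t)
    (htail : ∀ t, d' (i + t) = d (i + l + t)) (r : ℕ) :
    walkCost w d' (i + r) + walkCost w (fun t => d (i + t)) l = walkCost w d (i + l + r) := by
  have hhead' : ∑ j ∈ range i, w (d' j) (d' (j + 1)) = ∑ j ∈ range i, w (d j) (d (j + 1)) :=
    sum_congr rfl fun j hj => by
      rw [hhead j (mem_range.mp hj).le, hhead (j + 1) (mem_range.mp hj)]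
  have htail' : ∀ j, w (d' (i + j)) (d' (i + j + 1)) = w (d (i + l + j)) (d (i + l + j + 1)) :=
    fun j => by rw [htail, add_assoc i j 1, htail, ← add_assoc]
  simp only [walkCost, sum_range_add, hhead', htail']
  abel

lemma exists_walk_lt_walkCost_le_of_card_le [Fintype α] (hw : ∀ p q, 0 ≤ w p q) (d : ℕ → α) {a : ℕ}
    (ha : Fintype.card α ≤ a) :
    ∃ a' < a, ∃ d' : ℕ → α, d' 0 = d 0 ∧ d' a' = d a ∧ walkCost w d' a' ≤ walkCost w d a := by
  obtain ⟨i, hi, j, hj, hij, hdij⟩ := exists_ne_map_eq_of_card_lt_of_maps_to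
    (s := range (a + 1)) (t := univ) (f := d) (by simpa using Nat.lt_succ_of_le ha)
    (fun _ _ => mem_coe.mpr (mem_univ _))
  wlog hlt : i < j generalizing i j
  · exact this j hj i hi (Ne.symm hij) hdij.symm (by omega)
  obtain ⟨l, rfl⟩ := Nat.exists_eq_add_of_le hlt.le
  obtain ⟨r, rfl⟩ := Nat.exists_eq_add_of_le (Nat.lt_succ_iff.mp (mem_range.mp hj))
  set d' : ℕ → α := fun t => if t ≤ i then d t else d (t + l)
  have hhead : ∀ t ≤ i, d' t = d t := fun t ht => if_pos ht
  have htail : ∀ t, d' (i + t) = d (i + l + t) := by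
    intro t
    rcases t with _ | t
    · simpa [d'] using hdij
    · simp only [d', if_neg (show ¬ i + (t + 1) ≤ i by omega)]
      congr 1; omega
  refine ⟨i + r, by omega, d', hhead 0 (Nat.zero_le _), htail r, ?_⟩
  rw [← walkCost_add_walkCost_loop hhead htail r]
  linarith [walkCost_nonneg hw (fun t => d (i + t)) l]

lemma exists_walk_lt_card_walkCost_le [Fintype α] (hw : ∀ p q, 0 ≤ w p q) (d : ℕ → α) (a : ℕ) :
    ∃ a' < Fintype.card α, ∃ d' : ℕ → α, d' 0 = d 0 ∧ d' a' = d a ∧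
      walkCost w d' a' ≤ walkCost w d a := by
  induction a using Nat.strong_induction_on generalizing d with
  | _ a ih =>
  by_cases ha : a < Fintype.card α
  · exact ⟨a, ha, d, rfl, rfl, le_rfl⟩
  obtain ⟨a₁, ha₁, d₁, h₁0, h₁a, h₁⟩ := exists_walk_lt_walkCost_le_of_card_le hw d (not_lt.mp ha)
  obtain ⟨a₂, ha₂, d₂, h₂0, h₂a, h₂⟩ := ih a₁ ha₁ d₁
  exact ⟨a₂, ha₂, d₂, h₂0.trans h₁0, h₂a.trans h₁a, h₂.trans h₁⟩

lemma exists_walk_lt_card_isLeast_walkCosts [Fintype α] (hw : ∀ p q, 0 ≤ w p q) (s t : α) :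
    ∃ a < Fintype.card α, ∃ d : ℕ → α, d 0 = s ∧ d a = t ∧
      IsLeast (walkCosts w s t) (walkCost w d a) := by
  set N := Fintype.card α
  set short := {c | ∃ a < N, ∃ d : ℕ → α, d 0 = s ∧ d a = t ∧ walkCost w d a = c}
  have hfin : short.Finite := by
    -- a walk with fewer than `N` steps is determined by its length and its first `N` vertices
    refine (Set.finite_range fun p : Fin N × (Fin N → α) =>
      walkCost w (fun j => if h : j < N then p.2 ⟨j, h⟩ else s) p.1).subset ?_
    rintro _ ⟨a, ha, d, -, -, rfl⟩
    exact ⟨(⟨a, ha⟩, fun j => d j), walkCost_congr fun j hj => dif_pos (by omega)⟩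
  have hne : short.Nonempty := by
    obtain ⟨a, ha, d, h0, h1, -⟩ :=
      exists_walk_lt_card_walkCost_le hw (fun j => if j = 0 then s else t) 1
    exact ⟨_, a, ha, d, h0, h1, rfl⟩
  obtain ⟨_, ⟨a, ha, d, h0, h1, rfl⟩, hmin⟩ := Set.exists_min_image short id hfin hne
  refine ⟨a, ha, d, h0, h1, ⟨a, d, h0, h1, rfl⟩, ?_⟩
  rintro _ ⟨a', d', h0', h1', rfl⟩
  obtain ⟨a'', ha'', d'', h0'', h1'', hle⟩ := exists_walk_lt_card_walkCost_le hw d' a'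
  exact (hmin _ ⟨a'', ha'', d'', h0''.trans h0', h1''.trans h1', rfl⟩).trans hle

lemma walkDist_le_walkCost (hw : ∀ p q, 0 ≤ w p q) {s t : α} {d : ℕ → α} {a : ℕ}
    (h0 : d 0 = s) (ha : d a = t) : walkDist w s t ≤ walkCost w d a :=
  csInf_le ⟨0, by rintro _ ⟨a, d, -, -, rfl⟩; exact walkCost_nonneg hw d a⟩ ⟨a, d, h0, ha, rfl⟩

lemma walkDist_self_nonpos (hw : ∀ p q, 0 ≤ w p q) (t : α) : walkDist w t t ≤ 0 :=
  (walkDist_le_walkCost hw (d := fun _ => t) (a := 0) rfl rfl).trans_eq (sum_range_zero _)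

lemma exists_walk_lt_card_walkCost_eq_walkDist [Fintype α] (hw : ∀ p q, 0 ≤ w p q) (s t : α) :
    ∃ a < Fintype.card α, ∃ d : ℕ → α, d 0 = s ∧ d a = t ∧ walkCost w d a = walkDist w s t := by
  obtain ⟨a, ha, d, h0, h1, hleast⟩ := exists_walk_lt_card_isLeast_walkCosts hw s t
  exact ⟨a, ha, d, h0, h1, hleast.csInf_eq.symm⟩

lemma walkDist_le_add [Fintype α] (hw : ∀ p q, 0 ≤ w p q) (s s' t : α) :
    walkDist w s t ≤ w s s' + walkDist w s' t := by
  obtain ⟨a, -, d, h0, h1, hd⟩ := exists_walk_lt_card_walkCost_eq_walkDist hw s' t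
  rw [← hd, ← h0, ← walkCost_cons]
  exact walkDist_le_walkCost hw rfl h1

end Walks

lemma sum_comp_eq_sum_card_filter_mul {ι κ : Type*} [Fintype ι] [Fintype κ] [DecidableEq κ]
    (g : ι → κ) (f : κ → ℝ) :
    ∑ j, f (g j) = ∑ q, (#{j | g j = q} : ℝ) * f q := by
  rw [← sum_fiberwise' univ g f]
  simp only [sum_const, nsmul_eq_mul]

section Rounding

variable {ι : Type*} {u : ι}

lemma sub_floor_nonneg_and_le_one {x : ι → ℝ} {x' : ι → ℤ} (hx' : ∀ q ≠ u, x' q = ⌊x q⌋) :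
    ∀ q ≠ u, 0 ≤ x q - x' q ∧ x q - x' q ≤ 1 := fun q hq => by
  rw [hx' q hq]
  exact ⟨sub_nonneg.mpr (Int.floor_le _), by linarith [Int.lt_floor_add_one (x q)]⟩

-- In `hfrac` and `hsum`, `y` rounds every coordinate of `x` other than `u` down by at most one,
-- and `y u` absorbs the defect, so that `∑ y = ∑ x`.
variable [Fintype ι] [DecidableEq ι] {x y G : ι → ℝ}

lemma sub_eq_sum_erase_sub (hsum : ∑ q, y q = ∑ q, x q) :
    y u - x u = ∑ q ∈ univ.erase u, (x q - y q) := by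
  rw [sum_sub_distrib]
  linarith [sum_erase_add univ x (mem_univ u), sum_erase_add univ y (mem_univ u)]

lemma sum_mul_le_sum_mul_add_sum (hfrac : ∀ q ≠ u, 0 ≤ x q - y q ∧ x q - y q ≤ 1)
    (hsum : ∑ q, y q = ∑ q, x q) (hG : ∀ q, 0 ≤ G q) :
    ∑ q, x q * G q ≤ ∑ q, y q * G q + ∑ q, G q := by
  have hu : x u - y u ≤ 0 := by
    rw [← neg_sub, sub_eq_sum_erase_sub hsum, neg_nonpos]
    exact sum_nonneg fun q hq => (hfrac q (ne_of_mem_erase hq)).1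
  have herase : ∑ q ∈ univ.erase u, (x q - y q) * G q ≤ ∑ q ∈ univ.erase u, G q :=
    sum_le_sum fun q hq => mul_le_of_le_one_left (hG q) (hfrac q (ne_of_mem_erase hq)).2
  have hsub : ∑ q ∈ univ.erase u, G q ≤ ∑ q, G q :=
    sum_le_sum_of_subset_of_nonneg (erase_subset _ _) fun q _ _ => hG q
  have hsplit := sum_erase_add univ (fun q => (x q - y q) * G q) (mem_univ u)
  simp only [sub_mul, sum_sub_distrib] at hsplit herase
  linarith [mul_nonpos_of_nonpos_of_nonneg hu (hG u)]

lemma sum_mul_le_sum_mul_add_sum_erase (hfrac : ∀ q ≠ u, 0 ≤ x q - y q ∧ x q - y q ≤ 1)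
    (hsum : ∑ q, y q = ∑ q, x q) (hG : ∀ q, 0 ≤ G q) :
    ∑ q, y q * G q ≤ ∑ q, x q * G q + ∑ _q ∈ univ.erase u, G u := by
  have key : ∑ q, y q * G q - ∑ q, x q * G q
      = ∑ q ∈ univ.erase u, (x q - y q) * (G u - G q) := by
    rw [← sum_sub_distrib, ← sum_erase_add univ _ (mem_univ u), ← sub_mul,
      sub_eq_sum_erase_sub hsum, sum_mul, ← sum_add_distrib]
    exact sum_congr rfl fun _ _ => by ring
  have hle : ∑ q ∈ univ.erase u, (x q - y q) * (G u - G q) ≤ ∑ _q ∈ univ.erase u, G u :=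
    sum_le_sum fun q hq => by
      obtain ⟨h0, h1⟩ := hfrac q (ne_of_mem_erase hq)
      nlinarith [hG q, hG u]
  linarith

lemma sum_floor_rounding_eq_sum {x : ι → ℝ} {x' : ι → ℤ} {k : ℕ} (hx' : ∀ q ≠ u, x' q = ⌊x q⌋)
    (hx'u : x' u = ⌊x u⌋ + ((k : ℤ) - ∑ q, ⌊x q⌋)) (hk : ∑ q, x q = k) :
    ∑ q, (x' q : ℝ) = ∑ q, x q := by
  have hint : ∑ q, x' q = k := by
    rw [← sum_erase_add univ _ (mem_univ u), sum_congr rfl fun q hq => hx' q (ne_of_mem_erase hq),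
      hx'u, ← sum_erase_add univ (fun q => ⌊x q⌋) (mem_univ u)]
    ring
  rw [hk]
  exact_mod_cast hint

end Rounding

section Game

variable {m n k : ℕ} {R C : Fin m → Fin n → ℝ}

lemma LPobj_nonneg [NeZero n] {z : Fin m} {x : Fin n → ℝ} (hx : LPfeasible R k z x) (p q : Fin m) :
    0 ≤ LPobj R C k p q z x := by
  obtain ⟨hx0, hxk, hbest⟩ := hx
  have hC : ∑ q', x q' * C p q' ≤ k * univ.sup' univ_nonempty fun q' => C p q' :=
    calc ∑ q', x q' * C p q'
        ≤ ∑ q', x q' * univ.sup' univ_nonempty fun q' => C p q' :=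
          sum_le_sum fun q' _ => mul_le_mul_of_nonneg_left (le_sup' _ (mem_univ q')) (hx0 q')
      _ = k * univ.sup' univ_nonempty fun q' => C p q' := by rw [← sum_mul, hxk]
  have := hbest q
  unfold LPobj
  linarith

lemma Tcol_add_Trow_mem_wstarSet [NeZero m] [NeZero n] (p q : Fin m) (𝒞 : Fin k → Fin n) :
    Tcol C p 𝒞 + Trow R 𝒞 q ∈ wstarSet R C k p q := by
  obtain ⟨z, -, hz⟩ := exists_mem_eq_sup' univ_nonempty fun i => ∑ j, R i (𝒞 j)
  refine ⟨z, fun q' => #{j | 𝒞 j = q'}, ⟨fun _ => Nat.cast_nonneg _, ?_, fun z' => ?_⟩, ?_⟩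
  · simpa using (sum_comp_eq_sum_card_filter_mul 𝒞 fun _ => (1 : ℝ)).symm
  · rw [← sum_comp_eq_sum_card_filter_mul 𝒞 (R z'), ← sum_comp_eq_sum_card_filter_mul 𝒞 (R z),
      ← hz]
    exact le_sup' (fun i => ∑ j, R i (𝒞 j)) (mem_univ z')
  · rw [LPobj, Tcol, Trow, ← sum_comp_eq_sum_card_filter_mul 𝒞 (C p),
      ← sum_comp_eq_sum_card_filter_mul 𝒞 (R z), ← sum_comp_eq_sum_card_filter_mul 𝒞 (R q), hz]
    ring

lemma sum_erase_le_sum_sum [NeZero m] (hR : ∀ p q, 0 ≤ R p q) {u : Fin n}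
    (hu : ∀ q : Fin n, (univ.sup' univ_nonempty fun p => R p u) ≤
      univ.sup' univ_nonempty fun p => R p q) (i : Fin m) :
    ∑ _q ∈ univ.erase u, R i u ≤ ∑ p, ∑ q, R p q := by
  rw [sum_comm]
  refine (sum_le_sum fun q _ => ?_).trans
    (sum_le_sum_of_subset_of_nonneg (erase_subset u univ) fun q _ _ => sum_nonneg fun p _ => hR p q)
  obtain ⟨p, -, hp⟩ := exists_mem_eq_sup' univ_nonempty fun p => R p q
  calc R i u ≤ univ.sup' univ_nonempty fun p => R p u := le_sup' (fun p => R p u) (mem_univ i)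
    _ ≤ R p q := hp ▸ hu q
    _ ≤ ∑ p, R p q := single_le_sum (fun p _ => hR p q) (mem_univ p)

lemma Tcol_add_Trow_le_LPobj_add [NeZero m] [NeZero n] (hR : ∀ p q, 0 ≤ R p q)
    (hC : ∀ p q, 0 ≤ C p q)
    {z : Fin m} {x : Fin n → ℝ} (hx : LPfeasible R k z x) {u : Fin n}
    (hu : ∀ q : Fin n, (univ.sup' univ_nonempty fun p => R p u) ≤
      univ.sup' univ_nonempty fun p => R p q)
    {y : Fin n → ℝ} (hfrac : ∀ q ≠ u, 0 ≤ x q - y q ∧ x q - y q ≤ 1)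
    (hsum : ∑ q, y q = ∑ q, x q) {𝒞 : Fin k → Fin n} (hcount : ∀ q', (#{j | 𝒞 j = q'} : ℝ) = y q')
    (p q : Fin m) :
    Tcol C p 𝒞 + Trow R 𝒞 q ≤
      LPobj R C k p q z x + (2 * ∑ p, ∑ q, R p q + ∑ p, ∑ q, C p q) := by
  have h𝒞 : ∀ f : Fin n → ℝ, ∑ j, f (𝒞 j) = ∑ q', y q' * f q' := fun f => by
    simp only [sum_comp_eq_sum_card_filter_mul 𝒞 f, hcount]
  have hrow : ∀ M : Fin m → Fin n → ℝ, (∀ p q, 0 ≤ M p q) → ∀ i, ∑ q', M i q' ≤ ∑ p, ∑ q, M p q :=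
    fun M hM i => single_le_sum (fun p _ => sum_nonneg fun q _ => hM p q) (mem_univ i)
  have hmax : (univ.sup' univ_nonempty fun i => ∑ j, R i (𝒞 j)) ≤
      ∑ q', x q' * R z q' + ∑ p, ∑ q, R p q :=
    sup'_le _ _ fun i _ => by
      rw [h𝒞]
      linarith [sum_mul_le_sum_mul_add_sum_erase hfrac hsum (hR i), hx.2.2 i,
        sum_erase_le_sum_sum hR hu i]
  unfold Tcol Trow LPobj
  rw [h𝒞 (C p), h𝒞 (R q)]
  linarith [sum_mul_le_sum_mul_add_sum hfrac hsum (hC p),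
    sum_mul_le_sum_mul_add_sum hfrac hsum (hR q), hrow C hC p, hrow R hR q]

end Game

section Paths

variable {m n k : ℕ} [NeZero m] [NeZero n] (R C : Fin m → Fin n → ℝ)

lemma sub_le_pathCost (Φ : Fin m × (Fin k → Fin n) → ℝ)
    (hΦ : ∀ a b, Φ a - Φ b ≤ Tcol C a.1 b.2 + Trow R a.2 b.1)
    (P : ℕ → Fin m × (Fin k → Fin n)) (L : ℕ) : Φ (P 0) - Φ (P L) ≤ pathCost R C P L := by
  rw [← sum_range_sub' (fun t => Φ (P t))]
  exact sum_le_sum fun t _ => hΦ _ _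

lemma sub_le_sInf_transCosts (Φ : Fin m × (Fin k → Fin n) → ℝ)
    (hΦ : ∀ a b, Φ a - Φ b ≤ Tcol C a.1 b.2 + Trow R a.2 b.1) (a b : Fin m × (Fin k → Fin n)) :
    Φ a - Φ b ≤ sInf (transCosts R C a b) := by
  refine le_csInf ⟨_, 1, fun t => if t = 0 then a else b, rfl, rfl, rfl⟩ ?_
  rintro _ ⟨L, P, h0, hL, rfl⟩
  rw [← h0, ← hL]
  exact sub_le_pathCost R C Φ hΦ P L

lemma two_mul_le_sInf_transCosts {w : Fin m → Fin m → ℝ} {V : Fin m → ℝ}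
    (hw : ∀ p q (𝒞 : Fin k → Fin n), w p q ≤ Tcol C p 𝒞 + Trow R 𝒞 q)
    (hV : ∀ p p', V p ≤ w p p' + V p')
    {r1 rstar : Fin m} {C1 Cstar : Fin k → Fin n} (hinit : Tcol C r1 C1 = 0)
    (htarget : Trow R Cstar rstar = 0) (hVstar : V rstar ≤ 0) :
    2 * V r1 ≤ sInf (transCosts R C (r1, C1) (rstar, Cstar)) := by
  set H : (Fin k → Fin n) → ℝ := fun 𝒞 => univ.inf' univ_nonempty fun p => Trow R 𝒞 p + V p
  have H_le : ∀ 𝒞 p, H 𝒞 ≤ Trow R 𝒞 p + V p := fun 𝒞 p => inf'_le _ (mem_univ p)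
  have le_H : ∀ p 𝒞, V p ≤ Tcol C p 𝒞 + H 𝒞 := fun p 𝒞 => by
    obtain ⟨p', -, hp'⟩ := exists_mem_eq_inf' univ_nonempty fun p => Trow R 𝒞 p + V p
    rw [show H 𝒞 = Trow R 𝒞 p' + V p' from hp']
    linarith [hV p p', hw p p' 𝒞]
  have hΦ := sub_le_sInf_transCosts R C (fun s => V s.1 + H s.2)
    (fun a b => by linarith [le_H a.1 b.2, H_le a.2 b.1]) (r1, C1) (rstar, Cstar)
  linarith [le_H r1 C1, H_le Cstar rstar]

lemma pathCost_succ (P : ℕ → Fin m × (Fin k → Fin n)) (L : ℕ) :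
    pathCost R C P (L + 1) =
      pathCost R C P L + (Tcol C (P L).1 (P (L + 1)).2 + Trow R (P L).2 (P (L + 1)).1) :=
  sum_range_succ _ _

/-- The path `(d 0, c 0), (d 0, c 1), (d 1, c 1), (d 1, c 2), …, (d a, c (a + 1))`. -/
lemma pathCost_interleave (d : ℕ → Fin m) (c : ℕ → Fin k → Fin n) (a : ℕ) :
    pathCost R C (fun t => (d (t / 2), c ((t + 1) / 2))) (2 * a + 1) =
      2 * ∑ j ∈ range a, (Tcol C (d j) (c (j + 1)) + Trow R (c (j + 1)) (d (j + 1)))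
        + Tcol C (d a) (c (a + 1)) + Trow R (c 0) (d 0) := by
  induction a with
  | zero => simp [pathCost]
  | succ a ih =>
    rw [show 2 * (a + 1) + 1 = 2 * a + 1 + 1 + 1 by ring, pathCost_succ, pathCost_succ, ih,
      sum_range_succ]
    simp only [show (2 * a + 1) / 2 = a by omega, show (2 * a + 1 + 1) / 2 = a + 1 by omega,
      show (2 * a + 1 + 1 + 1) / 2 = a + 1 by omega,
      show (2 * a + 1 + 1 + 1 + 1) / 2 = a + 2 by omega]
    ring

lemma exists_path_along_walk (G : Fin m → Fin m → Fin k → Fin n) {r1 rstar : Fin m}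
    {C1 Cstar : Fin k → Fin n} (hinit : Trow R C1 r1 = 0) (htarget : Tcol C rstar Cstar = 0)
    {d : ℕ → Fin m} {a : ℕ} (hd0 : d 0 = r1) (hda : d a = rstar) :
    ∃ P : ℕ → Fin m × (Fin k → Fin n), P 0 = (r1, C1) ∧ P (2 * a + 1) = (rstar, Cstar) ∧
      (∀ t, (P t).2 = C1 ∨ (P t).2 = Cstar ∨ ∃ p q, (P t).2 = G p q) ∧
      pathCost R C P (2 * a + 1) = 2 * ∑ j ∈ range a,
        (Tcol C (d j) (G (d j) (d (j + 1))) + Trow R (G (d j) (d (j + 1))) (d (j + 1))) := by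
  set c : ℕ → Fin k → Fin n := fun j =>
    if j = 0 then C1 else if j = a + 1 then Cstar else G (d (j - 1)) (d j)
  refine ⟨fun t => (d (t / 2), c ((t + 1) / 2)), by simp [c, hd0], ?_, fun t => ?_, ?_⟩
  · simp [c, show (2 * a + 1) / 2 = a by omega, show (2 * a + 1 + 1) / 2 = a + 1 by omega, hda]
  · simp only [c]
    split_ifs <;> simp
  · have hc : ∀ j ∈ range a, c (j + 1) = G (d j) (d (j + 1)) := fun j hj => by
      simp [c, (mem_range.mp hj).ne]
    have hsum : ∑ j ∈ range a, (Tcol C (d j) (c (j + 1)) + Trow R (c (j + 1)) (d (j + 1))) =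
        ∑ j ∈ range a,
          (Tcol C (d j) (G (d j) (d (j + 1))) + Trow R (G (d j) (d (j + 1))) (d (j + 1))) :=
      sum_congr rfl fun j hj => by rw [hc j hj]
    rw [pathCost_interleave, hsum]
    simp [c, hd0, hda, hinit, htarget]

end Paths

/-- Given equilibria `(r(1),𝒞(1))` and `(r*,𝒞*)`, there is a transformation path between them
of total cost at most `OPT + 2m·(2‖R‖₁₁ + ‖C‖₁₁)` whose intermediate column profiles all
belong to `{𝒞(1), 𝒞*} ∪ {𝒞_{pq} : p, q}`, where the `𝒞_{pq}` are the rounded column profiles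
obtained from optimal solutions of the LP relaxations. -/
theorem approx_transformation_path_with_rounded_profiles
    (m n k : ℕ) [NeZero m] [NeZero n]
    (R C : Fin m → Fin n → ℝ)
    (hR : ∀ p q, 0 ≤ R p q) (hC : ∀ p q, 0 ≤ C p q)
    (r1 rstar : Fin m) (C1 Cstar : Fin k → Fin n)
    (hinit : IsEquilibrium R C r1 C1)
    (htarget : IsEquilibrium R C rstar Cstar)
    (z : Fin m → Fin m → Fin m) (x : Fin m → Fin m → Fin n → ℝ)
    (hfeas : ∀ p q : Fin m, LPfeasible R k (z p q) (x p q))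
    (hopt : ∀ p q : Fin m,
      IsLeast (wstarSet R C k p q) (LPobj R C k p q (z p q) (x p q)))
    (u : Fin n)
    (hu : ∀ q : Fin n, (univ.sup' univ_nonempty fun p => R p u) ≤
      univ.sup' univ_nonempty fun p => R p q)
    (x' : Fin m → Fin m → Fin n → ℤ)
    (hx' : ∀ p q : Fin m, ∀ q' ≠ u, x' p q q' = ⌊x p q q'⌋)
    (hx'u : ∀ p q : Fin m, x' p q u = ⌊x p q u⌋ + ((k : ℤ) - ∑ q', ⌊x p q q'⌋))
    (𝒞pq : Fin m → Fin m → (Fin k → Fin n))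
    (hcount : ∀ p q : Fin m, ∀ q' : Fin n,
      ((univ.filter fun j => 𝒞pq p q j = q').card : ℤ) = x' p q q') :
    ∃ (L : ℕ) (P : ℕ → Fin m × (Fin k → Fin n)),
      P 0 = (r1, C1) ∧ P L = (rstar, Cstar) ∧
      (∀ t ≤ L, (P t).2 = C1 ∨ (P t).2 = Cstar ∨ ∃ p q, (P t).2 = 𝒞pq p q) ∧
      pathCost R C P L ≤ sInf (transCosts R C (r1, C1) (rstar, Cstar))
        + 2 * m * (2 * (∑ p, ∑ q, R p q) + ∑ p, ∑ q, C p q) := by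
  set err := 2 * ∑ p, ∑ q, R p q + ∑ p, ∑ q, C p q
  set w : Fin m → Fin m → ℝ := fun p q => LPobj R C k p q (z p q) (x p q)
  have hw0 : ∀ p q, 0 ≤ w p q := fun p q => LPobj_nonneg (hfeas p q) p q
  have hround : ∀ p q, Tcol C p (𝒞pq p q) + Trow R (𝒞pq p q) q ≤ w p q + err := fun p q =>
    Tcol_add_Trow_le_LPobj_add hR hC (hfeas p q) hu (sub_floor_nonneg_and_le_one (hx' p q))
      (sum_floor_rounding_eq_sum (hx' p q) (hx'u p q) (hfeas p q).2.1)
      (fun q' => by exact_mod_cast hcount p q q') p q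
  have hOPT : 2 * walkDist w r1 rstar ≤ sInf (transCosts R C (r1, C1) (rstar, Cstar)) :=
    two_mul_le_sInf_transCosts R C (fun p q 𝒞 => (hopt p q).2 (Tcol_add_Trow_mem_wstarSet p q 𝒞))
      (fun p p' => walkDist_le_add hw0 p p' rstar) hinit.2 htarget.1
      (walkDist_self_nonpos hw0 rstar)
  obtain ⟨a, ha, d, hd0, hda, hd⟩ := exists_walk_lt_card_walkCost_eq_walkDist hw0 r1 rstar
  obtain ⟨P, hP0, hPL, hPcols, hPcost⟩ :=
    exists_path_along_walk R C 𝒞pq hinit.1 htarget.2 hd0 hda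
  refine ⟨2 * a + 1, P, hP0, hPL, fun t _ => hPcols t, ?_⟩
  have herr : 0 ≤ err := add_nonneg
    (mul_nonneg zero_le_two (sum_nonneg fun p _ => sum_nonneg fun q _ => hR p q))
    (sum_nonneg fun p _ => sum_nonneg fun q _ => hC p q)
  have ham : (a : ℝ) ≤ m := by
    rw [Fintype.card_fin] at ha
    exact_mod_cast ha.le
  calc pathCost R C P (2 * a + 1)
      ≤ 2 * ∑ j ∈ range a, (w (d j) (d (j + 1)) + err) := by
        rw [hPcost]
        gcongr 2 * ∑ j ∈ range a, ?_ with j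
        exact hround _ _
    _ = 2 * walkDist w r1 rstar + 2 * a * err := by
        rw [sum_add_distrib, sum_const, card_range, nsmul_eq_mul, ← hd, walkCost]
        ring
    _ ≤ _ := add_le_add hOPT (by gcongr)
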